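/- Let ϱ, a¹, a² : ℝ⁴ → ℝ be smooth. Then the Hamiltonian H₉ = Σ ε^{i₁i₂i₃i₄} ε^{j₁j₂j₃j₄} (∂_{i₁}ϱ)(∂_{i₂}ϱ)(∂_{i₃}∂_{j₁}a¹)(∂_{j₂}a¹)(∂_{i₄}∂_{j₃}a²)(∂_{j₄}a²), the sum taken over all i₁,…,i₄,j₁,…,j₄ ∈ {1,2,3,4}, vanishes identically on ℝ⁴: H₉ ≡ 0. Equivalently, the graph-to-multivector morphism φ sends the four-dimensional Nambu micro-graph encoded [1,2,3,5;3,4,5,6] to the zero function. -/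

import Mathlib

/-!
The Levi-Civita symbol contracting the two outgoing edges of vertex 1 that land on the same
function `ϱ` is antisymmetric in those two indices, while `(∂_{i₁}ϱ)(∂_{i₂}ϱ)` is symmetric in
them; a contraction of an antisymmetric tensor against a symmetric one vanishes.
-/

/-- The partial derivative `∂/∂xⁱ` of a function on `ℝ⁴ ≃ (Fin 4 → ℝ)`. -/
noncomputable def pd (i : Fin 4) (f : (Fin 4 → ℝ) → ℝ) : (Fin 4 → ℝ) → ℝ :=
  fun x => fderiv ℝ f x (Pi.single i 1)

/-- The totally antisymmetric four-index Levi-Civita symbol with `ε⁰¹²³ = 1`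
(indices `1,…,4` of the paper are `0,…,3` here), via the Vandermonde formula. -/
noncomputable def eps (i j k l : Fin 4) : ℝ :=
  (((j : ℝ) - (i : ℝ)) * ((k : ℝ) - (i : ℝ)) * ((l : ℝ) - (i : ℝ)) *
    ((k : ℝ) - (j : ℝ)) * ((l : ℝ) - (j : ℝ)) * ((l : ℝ) - (k : ℝ))) / 12

/-- `H₉ = φ([1,2,3,5;3,4,5,6])`, the Hamiltonian
`Σ ε^{i₁i₂i₃i₄} ε^{j₁j₂j₃j₄} (∂_{i₁}ϱ)(∂_{i₂}ϱ)(∂_{i₃}∂_{j₁}a¹)(∂_{j₂}a¹)(∂_{i₄}∂_{j₃}a²)(∂_{j₄}a²)`. -/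
noncomputable def H₉ (ϱ a₁ a₂ : (Fin 4 → ℝ) → ℝ) (x : Fin 4 → ℝ) : ℝ :=
  ∑ i₁ : Fin 4, ∑ i₂ : Fin 4, ∑ i₃ : Fin 4, ∑ i₄ : Fin 4,
    ∑ j₁ : Fin 4, ∑ j₂ : Fin 4, ∑ j₃ : Fin 4, ∑ j₄ : Fin 4,
      eps i₁ i₂ i₃ i₄ * eps j₁ j₂ j₃ j₄ *
        (pd i₁ ϱ x * pd i₂ ϱ x * pd i₃ (pd j₁ a₁) x * pd j₂ a₁ x *
          pd i₄ (pd j₃ a₂) x * pd j₄ a₂ x)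

open Finset

theorem sum_sum_eq_zero_of_antisymm {ι G : Type*} [Fintype ι] [AddCommGroup G]
    [IsAddTorsionFree G] (f : ι → ι → G) (hf : ∀ i j, f j i = -f i j) :
    ∑ i, ∑ j, f i j = 0 := by
  refine self_eq_neg.mp ?_
  calc ∑ i, ∑ j, f i j = ∑ i, ∑ j, f j i := sum_comm
    _ = ∑ i, ∑ j, -f i j := sum_congr rfl fun i _ => sum_congr rfl fun j _ => hf i j
    _ = -∑ i, ∑ j, f i j := by simp only [sum_neg_distrib]

lemma eps_swap₁₂ (a b c d : Fin 4) : eps b a c d = -eps a b c d := by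
  unfold eps; ring

theorem H9_vanishes_4d_general
    (ϱ a₁ a₂ : (Fin 4 → ℝ) → ℝ) :
    ∀ x : Fin 4 → ℝ, H₉ ϱ a₁ a₂ x = 0 := by
  intro x
  refine sum_sum_eq_zero_of_antisymm _ fun i₁ i₂ => ?_
  simp only [← sum_neg_distrib]
  refine sum_congr rfl fun i₃ _ => sum_congr rfl fun i₄ _ => sum_congr rfl fun j₁ _ =>
    sum_congr rfl fun j₂ _ => sum_congr rfl fun j₃ _ => sum_congr rfl fun j₄ _ => ?_
  rw [eps_swap₁₂]
  ring

/-- For all smooth `ϱ, a¹, a² : ℝ⁴ → ℝ`, the Hamiltonian `H₉` of the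
four-dimensional Nambu micro-graph encoded `[1,2,3,5;3,4,5,6]` vanishes
identically on `ℝ⁴`: `φ` sends this graph to the zero function. -/
theorem H9_vanishes_4d
    (ϱ a₁ a₂ : (Fin 4 → ℝ) → ℝ)
    (hϱ : ContDiff ℝ (⊤ : ℕ∞) ϱ) (ha₁ : ContDiff ℝ (⊤ : ℕ∞) a₁)
    (ha₂ : ContDiff ℝ (⊤ : ℕ∞) a₂) :
    ∀ x : Fin 4 → ℝ, H₉ ϱ a₁ a₂ x = 0 :=
  H9_vanishes_4d_general ϱ a₁ a₂
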